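/- Let α ∈ ℝ and define, for ζ ∈ ℂ∖(−∞,1], G_α(ζ) := exp( −πiα·ζ^{1/2}·(1/(2πi))·∫_0^1 x^{−1/2}/(x−ζ) dx ), where ζ^{1/2} is the principal square root. Then: (1) G_α is holomorphic and non-vanishing on ℂ∖(−∞,1]; (2) for x ∈ (−∞,0), the boundary values from above and below satisfy G_{α+}(x)·G_{α−}(x) = 1; (3) for x ∈ (0,1), the boundary values satisfy G_{α−}(x) = G_{α+}(x)·e^{απi}; (4) G_α and 1/G_α are bounded in a punctured neighborhood of 0 in ℂ∖(−∞,1]; (5) there exist constants 0 < c ≤ C such that c·|ζ−1|^{−α/2} ≤ |G_α(ζ)| ≤ C·|ζ−1|^{−α/2} for ζ near 1 in ℂ∖(−∞,1]; (6) G_α(ζ) = 1 + O(ζ^{−1/2}) as ζ → ∞, uniformly in ℂ∖(−∞,1]. -/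

import Mathlib

/-!
Put `w = ζ^{1/2}`. On `ℂ ∖ (−∞,1]` we have `Re w > 0`, and `w + t ∉ (−∞,0]` for `t ∈ [−1,1]`, so
`x ↦ w⁻¹ (log (w − √x) − log (w + √x))` is an antiderivative of `x^{−1/2}/(x − ζ)` on `[0,1]` and
`G_α(ζ) = exp (−(α/2) (log (w − 1) − log (w + 1)))`. Everything is read off this closed form.
Since `G_α(conj ζ) = conj (G_α ζ)`, the lower boundary value is the conjugate of the upper one.
Over `x < 0` the upper value of `w` is purely imaginary, so `|w − 1| = |w + 1|` and `|G_{α+}| = 1`;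
over `0 < x < 1` it is `√x < 1`, where `log (w − 1)` has imaginary part `π`.
Near `1`, `|ζ − 1| = |w − 1| |w + 1|` with `1 < |w + 1| ≤ 5/2`. Near `∞`, the mean value theorem
for `t ↦ log (w + t)` on `[−1,1]` gives `log (w + 1) − log (w − 1) = O(1/|w|)`.
-/

open Complex Filter Topology MeasureTheory intervalIntegral

noncomputable section

/-- The slit plane `ℂ ∖ (−∞,1]`. -/
def SlitPlane1 : Set ℂ := {ζ : ℂ | ¬(ζ.im = 0 ∧ ζ.re ≤ 1)}

/-- `G_α(ζ) = exp( −πiα ζ^{1/2} (1/(2πi)) ∫_0^1 x^{−1/2}/(x−ζ) dx )`, with the principal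
branch of the square root. -/
def Gfun (α : ℝ) (ζ : ℂ) : ℂ :=
  Complex.exp (-((Real.pi : ℂ) * Complex.I * (α : ℂ)) * ζ ^ ((1 : ℂ) / 2) *
    ((2 * (Real.pi : ℂ) * Complex.I)⁻¹ *
      ∫ x in (0:ℝ)..1, (((Real.sqrt x)⁻¹ : ℝ) : ℂ) / ((x : ℂ) - ζ)))

open ComplexConjugate

lemma mem_SlitPlane1_iff {ζ : ℂ} : ζ ∈ SlitPlane1 ↔ ζ - 1 ∈ slitPlane := by
  rw [mem_slitPlane_iff, SlitPlane1, Set.mem_ofPred_eq, sub_re, sub_im, one_re, one_im, sub_zero]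
  constructor
  · intro h
    by_cases him : ζ.im = 0
    · exact Or.inl (by linarith [not_le.mp fun hre => h ⟨him, hre⟩])
    · exact Or.inr him
  · rintro (h | h) ⟨him, hre⟩
    · linarith
    · exact h him

lemma isOpen_SlitPlane1 : IsOpen SlitPlane1 := by
  have : SlitPlane1 = (· - 1) ⁻¹' slitPlane := Set.ext fun _ => mem_SlitPlane1_iff
  rw [this]
  exact isOpen_slitPlane.preimage (continuous_sub_right 1)

lemma SlitPlane1_subset_slitPlane : SlitPlane1 ⊆ slitPlane := fun ζ hζ => by
  rw [mem_SlitPlane1_iff, mem_slitPlane_iff] at hζ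
  rw [mem_slitPlane_iff]
  simp only [sub_re, one_re, sub_im, one_im, sub_zero] at hζ
  rcases hζ with h | h
  · exact Or.inl (by linarith)
  · exact Or.inr h

lemma conj_mem_SlitPlane1 {ζ : ℂ} (hζ : ζ ∈ SlitPlane1) : conj ζ ∈ SlitPlane1 := by
  simpa [SlitPlane1] using hζ

lemma ofReal_add_mul_I_mem_SlitPlane1 (x : ℝ) {ε : ℝ} (hε : 0 < ε) :
    (x : ℂ) + ε * I ∈ SlitPlane1 := by
  simp [SlitPlane1, hε.ne']

lemma cpow_half_sq (ζ : ℂ) : (ζ ^ ((1 : ℂ) / 2)) ^ 2 = ζ := by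
  rw [one_div]
  exact cpow_ofNat_inv_pow ζ 2

lemma norm_cpow_half (ζ : ℂ) : ‖ζ ^ ((1 : ℂ) / 2)‖ = √‖ζ‖ := by
  rw [Real.sqrt_eq_rpow, ← norm_cpow_real]
  norm_num

lemma cpow_half_eq_exp {ζ : ℂ} (hζ : ζ ≠ 0) :
    ζ ^ ((1 : ℂ) / 2) = exp (Real.log ‖ζ‖ / 2 + (arg ζ / 2 : ℝ) * I) := by
  rw [cpow_def_of_ne_zero hζ, log]
  push_cast
  ring_nf

lemma re_cpow_half_pos {ζ : ℂ} (hζ : ζ ∈ slitPlane) : 0 < (ζ ^ ((1 : ℂ) / 2)).re := by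
  rw [cpow_half_eq_exp (slitPlane_ne_zero hζ), exp_re]
  have := Complex.neg_pi_lt_arg ζ
  have := (Complex.arg_le_pi ζ).lt_of_ne (slitPlane_arg_ne_pi hζ)
  have : 0 < Real.cos (arg ζ / 2) := Real.cos_pos_of_mem_Ioo ⟨by linarith, by linarith⟩
  simp only [add_re, add_im, mul_re, mul_im, ofReal_re, ofReal_im, I_re, I_im]
  norm_num
  positivity

lemma im_cpow_half_nonneg {ζ : ℂ} (hζ : 0 ≤ ζ.im) : 0 ≤ (ζ ^ ((1 : ℂ) / 2)).im := by
  rcases eq_or_ne ζ 0 with rfl | hζ0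
  · simp
  rw [cpow_half_eq_exp hζ0, exp_im]
  have := Complex.arg_nonneg_iff.mpr hζ
  have := Complex.arg_le_pi ζ
  have : 0 ≤ Real.sin (arg ζ / 2) :=
    Real.sin_nonneg_of_nonneg_of_le_pi (by linarith) (by linarith [Real.pi_pos])
  simp only [add_re, add_im, mul_re, mul_im, ofReal_re, ofReal_im, I_re, I_im]
  norm_num
  positivity

lemma cpow_half_sq_re_im (ζ : ℂ) :
    (ζ ^ ((1 : ℂ) / 2)).re ^ 2 - (ζ ^ ((1 : ℂ) / 2)).im ^ 2 = ζ.re ∧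
      2 * (ζ ^ ((1 : ℂ) / 2)).re * (ζ ^ ((1 : ℂ) / 2)).im = ζ.im := by
  obtain ⟨hr, hi⟩ := Complex.ext_iff.mp (cpow_half_sq ζ)
  simp only [sq, mul_re, mul_im] at hr hi
  constructor <;> linarith

lemma cpow_half_add_mem_slitPlane {ζ : ℂ} (hζ : ζ ∈ SlitPlane1) {t : ℝ} (ht : -1 ≤ t) :
    ζ ^ ((1 : ℂ) / 2) + t ∈ slitPlane := by
  have hre := re_cpow_half_pos (SlitPlane1_subset_slitPlane hζ)
  have hsq := cpow_half_sq_re_im ζ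
  set w := ζ ^ ((1 : ℂ) / 2)
  rw [mem_slitPlane_iff, add_re, add_im, ofReal_re, ofReal_im, add_zero]
  by_cases him : ζ.im = 0
  · have h1 : 1 < ζ.re := by
      by_contra h
      exact hζ ⟨him, not_lt.mp h⟩
    have hwim : w.im = 0 := by
      rcases mul_eq_zero.mp (hsq.2.trans him) with h | h
      · linarith
      · exact h
    left
    nlinarith [hsq.1]
  · right
    rintro hwim
    exact him (by rw [← hsq.2, hwim, mul_zero])

lemma ofReal_sub_sq_eq {x : ℝ} (hx : 0 ≤ x) (w : ℂ) :
    (x : ℂ) - w ^ 2 = -((w - (√x : ℝ)) * (w + (√x : ℝ))) := by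
  have : ((√x : ℝ) : ℂ) ^ 2 = x := by rw [← ofReal_pow, Real.sq_sqrt hx]
  linear_combination -this

lemma intervalIntegrable_inv_sqrt_div_sub {ζ : ℂ} (hζ : ∀ x : ℝ, 0 ≤ x → x ≤ 1 → (x : ℂ) ≠ ζ) :
    IntervalIntegrable (fun x : ℝ => (((√x)⁻¹ : ℝ) : ℂ) / ((x : ℂ) - ζ)) volume 0 1 := by
  have hsing : IntervalIntegrable (fun x : ℝ => (((√x)⁻¹ : ℝ) : ℂ)) volume 0 1 := by
    refine (intervalIntegrable_cpow' (r := -(1 / 2)) (by norm_num)).congr fun x hx => ?_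
    rw [Set.uIoc_of_le zero_le_one] at hx
    rw [Real.sqrt_eq_rpow, ← Real.rpow_neg hx.1.le, ofReal_cpow hx.1.le]
    push_cast
    rfl
  simp_rw [div_eq_mul_inv]
  refine hsing.mul_continuousOn (ContinuousOn.inv₀ (by fun_prop) fun x hx => ?_)
  rw [Set.uIcc_of_le zero_le_one] at hx
  exact sub_ne_zero.mpr (hζ x hx.1 hx.2)

lemma hasDerivAt_log_sub_sqrt_sub_log_add_sqrt {w : ℂ} {x : ℝ} (hx : 0 < x)
    (hsub : w - (√x : ℝ) ∈ slitPlane) (hadd : w + (√x : ℝ) ∈ slitPlane) :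
    HasDerivAt (fun y : ℝ => w⁻¹ * (log (w - (√y : ℝ)) - log (w + (√y : ℝ))))
      ((((√x)⁻¹ : ℝ) : ℂ) / ((x : ℂ) - w ^ 2)) x := by
  have hsqrt : HasDerivAt (fun y : ℝ => ((√y : ℝ) : ℂ)) ((1 / (2 * √x) : ℝ) : ℂ) x :=
    (Real.hasDerivAt_sqrt hx.ne').ofReal_comp
  have h := (((hsqrt.const_sub w).clog_real hsub).sub
    ((hsqrt.const_add w).clog_real hadd)).const_mul w⁻¹
  refine h.congr_deriv ?_
  have hw0 : w ≠ 0 := by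
    rintro rfl
    rw [zero_sub, neg_ofReal_mem_slitPlane] at hsub
    linarith [Real.sqrt_nonneg x]
  have hs : ((√x : ℝ) : ℂ) ≠ 0 := ofReal_ne_zero.mpr (Real.sqrt_pos.mpr hx).ne'
  rw [ofReal_sub_sq_eq hx.le]
  field_simp [slitPlane_ne_zero hsub, slitPlane_ne_zero hadd]
  push_cast
  ring

lemma integral_inv_sqrt_div_sub {w ζ : ℂ} (hwζ : w ^ 2 = ζ)
    (hw : ∀ t : ℝ, -1 ≤ t → t ≤ 1 → w + t ∈ slitPlane) :
    ∫ x in (0:ℝ)..1, (((√x)⁻¹ : ℝ) : ℂ) / ((x : ℂ) - ζ) =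
      w⁻¹ * (log (w - 1) - log (w + 1)) := by
  subst hwζ
  have hsub : ∀ x : ℝ, 0 ≤ x → x ≤ 1 → w - (√x : ℝ) ∈ slitPlane := fun x hx0 hx1 => by
    simpa [sub_eq_add_neg] using hw (-√x) (by simpa using Real.sqrt_le_one.mpr hx1)
      (by linarith [Real.sqrt_nonneg x])
  have hadd : ∀ x : ℝ, 0 ≤ x → x ≤ 1 → w + (√x : ℝ) ∈ slitPlane := fun x hx0 hx1 =>
    hw (√x) (by linarith [Real.sqrt_nonneg x]) (Real.sqrt_le_one.mpr hx1)
  have hne : ∀ x : ℝ, 0 ≤ x → x ≤ 1 → (x : ℂ) ≠ w ^ 2 := fun x hx0 hx1 => by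
    rw [← sub_ne_zero, ofReal_sub_sq_eq hx0, neg_ne_zero]
    exact mul_ne_zero (slitPlane_ne_zero (hsub x hx0 hx1)) (slitPlane_ne_zero (hadd x hx0 hx1))
  have hcont : ContinuousOn (fun y : ℝ => w⁻¹ * (log (w - (√y : ℝ)) - log (w + (√y : ℝ))))
      (Set.Icc 0 1) := by
    refine fun x hx => ContinuousAt.continuousWithinAt ?_
    have hs : ContinuousAt (fun y : ℝ => ((√y : ℝ) : ℂ)) x := by fun_prop
    exact (((continuousAt_const.sub hs).clog (hsub x hx.1 hx.2)).sub
      ((continuousAt_const.add hs).clog (hadd x hx.1 hx.2))).const_mul _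
  rw [integral_eq_sub_of_hasDeriv_right_of_le zero_le_one hcont
    (fun x hx => (hasDerivAt_log_sub_sqrt_sub_log_add_sqrt hx.1 (hsub x hx.1.le hx.2.le)
      (hadd x hx.1.le hx.2.le)).hasDerivWithinAt)
    (intervalIntegrable_inv_sqrt_div_sub hne)]
  simp

def logGfun (α : ℝ) (ζ : ℂ) : ℂ :=
  -((α : ℂ) / 2) * (log (ζ ^ ((1 : ℂ) / 2) - 1) - log (ζ ^ ((1 : ℂ) / 2) + 1))

lemma cpow_half_sub_one_mem_slitPlane {ζ : ℂ} (hζ : ζ ∈ SlitPlane1) :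
    ζ ^ ((1 : ℂ) / 2) - 1 ∈ slitPlane := by
  simpa [sub_eq_add_neg] using cpow_half_add_mem_slitPlane hζ le_rfl

lemma cpow_half_add_one_mem_slitPlane {ζ : ℂ} (hζ : ζ ∈ SlitPlane1) :
    ζ ^ ((1 : ℂ) / 2) + 1 ∈ slitPlane := by
  simpa using cpow_half_add_mem_slitPlane hζ (t := 1) (by norm_num)

lemma Gfun_eq_exp_logGfun (α : ℝ) {ζ : ℂ} (hζ : ζ ∈ SlitPlane1) :
    Gfun α ζ = exp (logGfun α ζ) := by
  have hw0 : ζ ^ ((1 : ℂ) / 2) ≠ 0 := fun h => by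
    have := re_cpow_half_pos (SlitPlane1_subset_slitPlane hζ)
    rw [h, zero_re] at this
    exact this.false
  rw [Gfun, integral_inv_sqrt_div_sub (cpow_half_sq ζ)
    (fun _ ht _ => cpow_half_add_mem_slitPlane hζ ht), logGfun]
  congr 1
  field_simp [Real.pi_ne_zero, I_ne_zero]

lemma differentiableAt_logGfun (α : ℝ) {ζ : ℂ} (hζ : ζ ∈ SlitPlane1) :
    DifferentiableAt ℂ (logGfun α) ζ := by
  have hw : DifferentiableAt ℂ (fun z : ℂ => z ^ ((1 : ℂ) / 2)) ζ :=
    differentiableAt_id.cpow_const (SlitPlane1_subset_slitPlane hζ)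
  exact ((hw.sub_const 1).clog (cpow_half_sub_one_mem_slitPlane hζ)).sub
    ((hw.add_const 1).clog (cpow_half_add_one_mem_slitPlane hζ)) |>.const_mul _

lemma differentiableOn_Gfun (α : ℝ) : DifferentiableOn ℂ (Gfun α) SlitPlane1 := fun _ hζ =>
  ((differentiableAt_logGfun α hζ).cexp.congr_of_eventuallyEq
    (Filter.eventuallyEq_of_mem (isOpen_SlitPlane1.mem_nhds hζ)
      fun _ hz => Gfun_eq_exp_logGfun α hz)).differentiableWithinAt

lemma logGfun_conj (α : ℝ) {ζ : ℂ} (hζ : ζ ∈ SlitPlane1) :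
    logGfun α (conj ζ) = conj (logGfun α ζ) := by
  have hsqrt : conj ζ ^ ((1 : ℂ) / 2) = conj (ζ ^ ((1 : ℂ) / 2)) := by
    rw [conj_cpow _ _ (slitPlane_arg_ne_pi (SlitPlane1_subset_slitPlane hζ)), map_div₀, map_one,
      map_ofNat]
  have hsub : conj (ζ ^ ((1 : ℂ) / 2)) - 1 = conj (ζ ^ ((1 : ℂ) / 2) - 1) := by simp
  have hadd : conj (ζ ^ ((1 : ℂ) / 2)) + 1 = conj (ζ ^ ((1 : ℂ) / 2) + 1) := by simp
  rw [logGfun, logGfun, hsqrt, hsub, hadd,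
    log_conj _ (slitPlane_arg_ne_pi (cpow_half_sub_one_mem_slitPlane hζ)),
    log_conj _ (slitPlane_arg_ne_pi (cpow_half_add_one_mem_slitPlane hζ))]
  simp only [map_mul, map_neg, map_sub, map_div₀, conj_ofReal, map_ofNat]

lemma Gfun_conj (α : ℝ) {ζ : ℂ} (hζ : ζ ∈ SlitPlane1) : Gfun α (conj ζ) = conj (Gfun α ζ) := by
  rw [Gfun_eq_exp_logGfun α (conj_mem_SlitPlane1 hζ), Gfun_eq_exp_logGfun α hζ,
    logGfun_conj α hζ, exp_conj]

lemma continuousWithinAt_log_of_ne_zero {z : ℂ} (hz : z ≠ 0) :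
    ContinuousWithinAt log {w : ℂ | 0 ≤ w.im} z := by
  by_cases h : z ∈ slitPlane
  · exact (continuousAt_clog h).continuousWithinAt
  · rw [mem_slitPlane_iff, not_or, not_lt, not_not] at h
    exact continuousWithinAt_log_of_re_neg_of_im_zero
      (h.1.lt_of_ne fun hre => hz (Complex.ext hre h.2)) h.2

lemma continuousWithinAt_cpow_const_of_ne_zero {z : ℂ} (hz : z ≠ 0) (s : ℂ) :
    ContinuousWithinAt (· ^ s) {w : ℂ | 0 ≤ w.im} z := by
  have h : ContinuousWithinAt (fun w => exp (log w * s)) {w : ℂ | 0 ≤ w.im} z :=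
    continuous_exp.continuousAt.comp_continuousWithinAt
      ((continuousWithinAt_log_of_ne_zero hz).mul continuousWithinAt_const)
  refine h.congr_of_eventuallyEq ?_ (cpow_def_of_ne_zero hz s)
  filter_upwards [mem_nhdsWithin_of_mem_nhds (isOpen_ne.mem_nhds hz)] with w hw
  exact cpow_def_of_ne_zero hw s

lemma continuousWithinAt_logGfun (α : ℝ) {z : ℂ} (hz0 : z ≠ 0) (hz1 : z ≠ 1) :
    ContinuousWithinAt (logGfun α) {w : ℂ | 0 ≤ w.im} z := by
  have hfac : (z ^ ((1 : ℂ) / 2) - 1) * (z ^ ((1 : ℂ) / 2) + 1) ≠ 0 := by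
    have : (z ^ ((1 : ℂ) / 2) - 1) * (z ^ ((1 : ℂ) / 2) + 1) = z - 1 := by
      linear_combination cpow_half_sq z
    rw [this]
    exact sub_ne_zero.mpr hz1
  have hsqrt := continuousWithinAt_cpow_const_of_ne_zero hz0 ((1 : ℂ) / 2)
  have hlog : ∀ c : ℝ, z ^ ((1 : ℂ) / 2) + c ≠ 0 →
      ContinuousWithinAt (fun ζ : ℂ => log (ζ ^ ((1 : ℂ) / 2) + c)) {w : ℂ | 0 ≤ w.im} z :=
    fun c hc => (continuousWithinAt_log_of_ne_zero hc).comp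
      (f := fun ζ : ℂ => ζ ^ ((1 : ℂ) / 2) + c) (hsqrt.add continuousWithinAt_const)
      fun ζ (hζ : 0 ≤ ζ.im) => by simpa using im_cpow_half_nonneg hζ
  have hlogsub := hlog (-1) (by simpa [← sub_eq_add_neg] using left_ne_zero_of_mul hfac)
  have hlogadd := hlog 1 (by simpa using right_ne_zero_of_mul hfac)
  simp only [ofReal_neg, ofReal_one, ← sub_eq_add_neg] at hlogsub hlogadd
  exact (hlogsub.sub hlogadd).const_mul _

lemma tendsto_Gfun_boundary (α : ℝ) {x : ℝ} (hx0 : x ≠ 0) (hx1 : x ≠ 1) :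
    Tendsto (fun ε : ℝ => Gfun α ((x : ℂ) + ε * I)) (𝓝[>] 0) (𝓝 (exp (logGfun α x))) ∧
    Tendsto (fun ε : ℝ => Gfun α ((x : ℂ) - ε * I)) (𝓝[>] 0)
      (𝓝 (exp (conj (logGfun α x)))) := by
  have hpath : ContinuousWithinAt (fun ε : ℝ => (x : ℂ) + ε * I) (Set.Ioi 0) 0 := by
    fun_prop
  have hlim : Tendsto (fun ε : ℝ => exp (logGfun α ((x : ℂ) + ε * I))) (𝓝[>] 0)
      (𝓝 (exp (logGfun α x))) := by
    have h := (continuous_exp.continuousAt.comp_continuousWithinAt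
      ((continuousWithinAt_logGfun α (ofReal_ne_zero.mpr hx0)
        (by exact_mod_cast hx1)).comp_of_eq hpath (fun ε (hε : 0 < ε) => by simp [hε.le])
        (by simp))).tendsto
    simpa [Function.comp_def] using h
  have hupper : Tendsto (fun ε : ℝ => Gfun α ((x : ℂ) + ε * I)) (𝓝[>] 0)
      (𝓝 (exp (logGfun α x))) :=
    hlim.congr' (eventually_nhdsWithin_of_forall fun ε (hε : 0 < ε) =>
      (Gfun_eq_exp_logGfun α (ofReal_add_mul_I_mem_SlitPlane1 x hε)).symm)
  refine ⟨hupper, ?_⟩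
  rw [exp_conj]
  refine ((continuous_conj.tendsto _).comp hupper).congr' ?_
  filter_upwards [self_mem_nhdsWithin] with ε (hε : 0 < ε)
  rw [Function.comp_apply, ← Gfun_conj α (ofReal_add_mul_I_mem_SlitPlane1 x hε)]
  simp [sub_eq_add_neg]

lemma re_logGfun (α : ℝ) (ζ : ℂ) : (logGfun α ζ).re =
    -(α / 2) * (Real.log ‖ζ ^ ((1 : ℂ) / 2) - 1‖ - Real.log ‖ζ ^ ((1 : ℂ) / 2) + 1‖) := by
  simp [logGfun, log_re]

lemma im_logGfun (α : ℝ) (ζ : ℂ) : (logGfun α ζ).im =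
    -(α / 2) * (arg (ζ ^ ((1 : ℂ) / 2) - 1) - arg (ζ ^ ((1 : ℂ) / 2) + 1)) := by
  simp [logGfun, log_im]

lemma re_cpow_half_of_neg {x : ℝ} (hx : x < 0) : ((x : ℂ) ^ ((1 : ℂ) / 2)).re = 0 := by
  obtain ⟨hr, hi⟩ := cpow_half_sq_re_im (x : ℂ)
  rw [ofReal_re] at hr
  rw [ofReal_im, mul_assoc, mul_eq_zero, mul_eq_zero] at hi
  rcases hi with h | h | h
  · norm_num at h
  · exact h
  · nlinarith [sq_nonneg ((x : ℂ) ^ ((1 : ℂ) / 2)).re]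

lemma re_logGfun_of_neg (α : ℝ) {x : ℝ} (hx : x < 0) : (logGfun α x).re = 0 := by
  have hre := re_cpow_half_of_neg hx
  have hnorm : ‖(x : ℂ) ^ ((1 : ℂ) / 2) - 1‖ = ‖(x : ℂ) ^ ((1 : ℂ) / 2) + 1‖ := by
    simp only [norm_def, normSq_apply, sub_re, add_re, sub_im, add_im, one_re, one_im, hre]
    ring_nf
  rw [re_logGfun, hnorm, sub_self, mul_zero]

lemma conj_logGfun_of_pos_of_lt_one (α : ℝ) {x : ℝ} (hx0 : 0 < x) (hx1 : x < 1) :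
    conj (logGfun α x) = logGfun α x + (α : ℂ) * (Real.pi : ℂ) * I := by
  have hsqrt : (x : ℂ) ^ ((1 : ℂ) / 2) = ((√x : ℝ) : ℂ) := by
    rw [Real.sqrt_eq_rpow, ofReal_cpow hx0.le]
    norm_num
  have hs0 : 0 < √x := Real.sqrt_pos.mpr hx0
  have hs1 : √x < 1 := (Real.sqrt_lt' one_pos).mpr (by linarith)
  have him : (logGfun α x).im = -(α * Real.pi / 2) := by
    rw [im_logGfun, hsqrt, ← ofReal_one, ← ofReal_sub, ← ofReal_add,
      arg_ofReal_of_neg (by linarith), arg_ofReal_of_nonneg (by linarith)]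
    ring
  have h := sub_conj (logGfun α x)
  rw [him] at h
  push_cast at h
  linear_combination -h

lemma norm_Gfun (α : ℝ) {ζ : ℂ} (hζ : ζ ∈ SlitPlane1) :
    ‖Gfun α ζ‖ = Real.exp (-(α / 2) *
      (Real.log ‖ζ ^ ((1 : ℂ) / 2) - 1‖ - Real.log ‖ζ ^ ((1 : ℂ) / 2) + 1‖)) := by
  rw [Gfun_eq_exp_logGfun α hζ, norm_exp, re_logGfun]

lemma norm_exp_le_and_norm_inv_le {z : ℂ} {K : ℝ} (h : |z.re| ≤ K) :
    ‖exp z‖ ≤ Real.exp K ∧ ‖(exp z)⁻¹‖ ≤ Real.exp K := by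
  rw [norm_inv, norm_exp, ← Real.exp_neg]
  exact ⟨Real.exp_le_exp.mpr (abs_le.mp h).2, Real.exp_le_exp.mpr (by linarith [(abs_le.mp h).1])⟩

lemma abs_log_le_log_of_inv_le_of_le {r c : ℝ} (hc : 0 < c) (h₁ : c⁻¹ ≤ r) (h₂ : r ≤ c) :
    |Real.log r| ≤ Real.log c := by
  have hr : 0 < r := (inv_pos.mpr hc).trans_le h₁
  refine abs_le.mpr ⟨?_, Real.log_le_log hr h₂⟩
  rw [← Real.log_inv]
  exact Real.log_le_log (inv_pos.mpr hc) h₁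

lemma abs_log_norm_add_le_log_two {w u : ℂ} (hw : ‖w‖ ≤ 1 / 2) (hu : ‖u‖ = 1) :
    |Real.log ‖w + u‖| ≤ Real.log 2 := by
  have h := abs_norm_sub_norm_le (w + u) u
  rw [add_sub_cancel_right, hu] at h
  exact abs_log_le_log_of_inv_le_of_le two_pos (by linarith [(abs_le.mp h).1])
    (by linarith [(abs_le.mp h).2])

lemma norm_Gfun_le_and_norm_inv_le_of_norm_le (α : ℝ) {ζ : ℂ} (hζ : ζ ∈ SlitPlane1)
    (h : ‖ζ‖ ≤ 1 / 4) : ‖Gfun α ζ‖ ≤ 2 ^ |α| ∧ ‖(Gfun α ζ)⁻¹‖ ≤ 2 ^ |α| := by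
  have hw : ‖ζ ^ ((1 : ℂ) / 2)‖ ≤ 1 / 2 := by
    rw [norm_cpow_half]
    exact Real.sqrt_le_iff.mpr ⟨by norm_num, by norm_num [h]⟩
  have hsub := abs_log_norm_add_le_log_two hw (norm_neg (1 : ℂ) ▸ norm_one)
  have hadd := abs_log_norm_add_le_log_two hw norm_one
  rw [← sub_eq_add_neg] at hsub
  have hre : |(logGfun α ζ).re| ≤ |α| * Real.log 2 := by
    rw [re_logGfun, abs_mul, abs_neg, abs_div, abs_two]
    calc |α| / 2 * |Real.log ‖ζ ^ ((1 : ℂ) / 2) - 1‖ - Real.log ‖ζ ^ ((1 : ℂ) / 2) + 1‖|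
        ≤ |α| / 2 * (Real.log 2 + Real.log 2) := by
          gcongr
          exact (abs_sub _ _).trans (add_le_add hsub hadd)
      _ = |α| * Real.log 2 := by ring
  rw [Gfun_eq_exp_logGfun α hζ, Real.rpow_def_of_pos two_pos, mul_comm]
  exact norm_exp_le_and_norm_inv_le hre

lemma one_lt_norm_cpow_half_add_one {ζ : ℂ} (hζ : ζ ∈ slitPlane) : 1 < ‖ζ ^ ((1 : ℂ) / 2) + 1‖ :=
  calc (1 : ℝ) < (ζ ^ ((1 : ℂ) / 2) + 1).re := by
        rw [add_re, one_re]
        linarith [re_cpow_half_pos hζ]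
    _ ≤ ‖ζ ^ ((1 : ℂ) / 2) + 1‖ := re_le_norm _

lemma sub_one_eq_cpow_half_sub_one_mul (ζ : ℂ) :
    ζ - 1 = (ζ ^ ((1 : ℂ) / 2) - 1) * (ζ ^ ((1 : ℂ) / 2) + 1) := by
  linear_combination -(cpow_half_sq ζ)

lemma norm_Gfun_eq_rpow_mul (α : ℝ) {ζ : ℂ} (hζ : ζ ∈ SlitPlane1) :
    ‖Gfun α ζ‖ = ‖ζ - 1‖ ^ (-(α / 2)) * Real.exp (α * Real.log ‖ζ ^ ((1 : ℂ) / 2) + 1‖) := by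
  have hsub := slitPlane_ne_zero (cpow_half_sub_one_mem_slitPlane hζ)
  have hadd := slitPlane_ne_zero (cpow_half_add_one_mem_slitPlane hζ)
  rw [norm_Gfun α hζ, sub_one_eq_cpow_half_sub_one_mul ζ, norm_mul,
    Real.rpow_def_of_pos (by positivity), Real.log_mul (by positivity) (by positivity),
    ← Real.exp_add]
  congr 1
  ring

lemma norm_Gfun_near_one (α : ℝ) {ζ : ℂ} (hζ : ζ ∈ SlitPlane1) (h : ‖ζ - 1‖ ≤ 1 / 2) :
    (5 / 2 : ℝ) ^ (-|α|) * ‖ζ - 1‖ ^ (-(α / 2)) ≤ ‖Gfun α ζ‖ ∧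
      ‖Gfun α ζ‖ ≤ (5 / 2 : ℝ) ^ |α| * ‖ζ - 1‖ ^ (-(α / 2)) := by
  have hadd := one_lt_norm_cpow_half_add_one (SlitPlane1_subset_slitPlane hζ)
  have hsub : ‖ζ ^ ((1 : ℂ) / 2) - 1‖ ≤ 1 / 2 := by
    rw [sub_one_eq_cpow_half_sub_one_mul, norm_mul] at h
    nlinarith [norm_nonneg (ζ ^ ((1 : ℂ) / 2) - 1)]
  have hadd' : ‖ζ ^ ((1 : ℂ) / 2) + 1‖ ≤ 5 / 2 := by
    have := norm_add_le (ζ ^ ((1 : ℂ) / 2) - 1) 2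
    rw [show ζ ^ ((1 : ℂ) / 2) - 1 + 2 = ζ ^ ((1 : ℂ) / 2) + 1 by ring] at this
    linarith [Complex.norm_two]
  have hlog : |α * Real.log ‖ζ ^ ((1 : ℂ) / 2) + 1‖| ≤ |α| * Real.log (5 / 2) := by
    rw [abs_mul, abs_of_nonneg (Real.log_nonneg hadd.le)]
    gcongr
  rw [norm_Gfun_eq_rpow_mul α hζ, mul_comm (‖ζ - 1‖ ^ (-(α / 2)))]
  constructor <;> gcongr <;> rw [Real.rpow_def_of_pos (by norm_num)] <;> apply Real.exp_le_exp.mpr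
  · linarith [(abs_le.mp hlog).1]
  · linarith [(abs_le.mp hlog).2]

lemma norm_log_add_one_sub_log_sub_one_le {w : ℂ}
    (hw : ∀ t : ℝ, -1 ≤ t → t ≤ 1 → w + t ∈ slitPlane) (h2 : 2 ≤ ‖w‖) :
    ‖log (w + 1) - log (w - 1)‖ ≤ 4 / ‖w‖ := by
  have hderiv : ∀ t ∈ Set.Icc (-1 : ℝ) 1,
      HasDerivWithinAt (fun s : ℝ => log (w + s)) (1 / (w + t)) (Set.Icc (-1) 1) t :=
    fun t ht => by
      simpa using (((hasDerivAt_id t).ofReal_comp.const_add w).clog_real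
        (hw t ht.1 ht.2)).hasDerivWithinAt
  have hbound : ∀ t ∈ Set.Ico (-1 : ℝ) 1, ‖1 / (w + t)‖ ≤ 2 / ‖w‖ := fun t ht => by
    have h := norm_sub_norm_le w (-(t : ℂ))
    rw [norm_neg, norm_real, Real.norm_eq_abs, sub_neg_eq_add] at h
    have ht' : |t| ≤ 1 := abs_le.mpr ⟨ht.1, ht.2.le⟩
    rw [norm_div, norm_one, div_le_div_iff₀ (by linarith) (by linarith)]
    linarith
  have h := norm_image_sub_le_of_norm_deriv_le_segment' hderiv hbound 1 (by norm_num)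
  simp only [ofReal_one, ofReal_neg, ← sub_eq_add_neg] at h
  linarith [show 2 / ‖w‖ * (1 - -1) = 4 / ‖w‖ by ring]

lemma norm_logGfun_le (α : ℝ) {ζ : ℂ} (hζ : ζ ∈ SlitPlane1) (h : 4 ≤ ‖ζ‖) :
    ‖logGfun α ζ‖ ≤ 2 * |α| / √‖ζ‖ := by
  have hw : 2 ≤ ‖ζ ^ ((1 : ℂ) / 2)‖ := by
    rw [norm_cpow_half]
    exact Real.le_sqrt_of_sq_le (by linarith)
  have hlog := norm_log_add_one_sub_log_sub_one_le
    (fun _ ht _ => cpow_half_add_mem_slitPlane hζ ht) hw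
  rw [logGfun, norm_mul, norm_neg, norm_div, norm_real, Real.norm_eq_abs, Complex.norm_two,
    norm_sub_rev, ← norm_cpow_half]
  calc |α| / 2 * ‖log (ζ ^ ((1 : ℂ) / 2) + 1) - log (ζ ^ ((1 : ℂ) / 2) - 1)‖
      ≤ |α| / 2 * (4 / ‖ζ ^ ((1 : ℂ) / 2)‖) := by gcongr
    _ = 2 * |α| / ‖ζ ^ ((1 : ℂ) / 2)‖ := by ring

lemma norm_Gfun_sub_one_le (α : ℝ) {ζ : ℂ} (hζ : ζ ∈ SlitPlane1) (h : (2 + 2 * |α|) ^ 2 ≤ ‖ζ‖) :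
    ‖Gfun α ζ - 1‖ ≤ 4 * |α| / √‖ζ‖ := by
  have hsqrt : 2 + 2 * |α| ≤ √‖ζ‖ := Real.le_sqrt_of_sq_le h
  have hL := norm_logGfun_le α hζ (by nlinarith [abs_nonneg α])
  have hL1 : ‖logGfun α ζ‖ ≤ 1 := hL.trans ((div_le_one (by linarith [abs_nonneg α])).mpr
    (by linarith))
  rw [Gfun_eq_exp_logGfun α hζ]
  calc ‖exp (logGfun α ζ) - 1‖ ≤ 2 * ‖logGfun α ζ‖ := norm_exp_sub_one_le hL1
    _ ≤ 2 * (2 * |α| / √‖ζ‖) := by gcongr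
    _ = 4 * |α| / √‖ζ‖ := by ring

/-- Properties of the auxiliary Szegő-type function `G_α`. -/
theorem Gfun_properties (α : ℝ) :
    DifferentiableOn ℂ (Gfun α) SlitPlane1 ∧
    (∀ ζ ∈ SlitPlane1, Gfun α ζ ≠ 0) ∧
    (∀ x : ℝ, x < 0 → ∃ Gp Gm : ℂ,
      Tendsto (fun ε : ℝ => Gfun α ((x : ℂ) + ε * Complex.I))
        (nhdsWithin 0 (Set.Ioi 0)) (𝓝 Gp) ∧
      Tendsto (fun ε : ℝ => Gfun α ((x : ℂ) - ε * Complex.I))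
        (nhdsWithin 0 (Set.Ioi 0)) (𝓝 Gm) ∧
      Gp * Gm = 1) ∧
    (∀ x : ℝ, 0 < x → x < 1 → ∃ Gp Gm : ℂ,
      Tendsto (fun ε : ℝ => Gfun α ((x : ℂ) + ε * Complex.I))
        (nhdsWithin 0 (Set.Ioi 0)) (𝓝 Gp) ∧
      Tendsto (fun ε : ℝ => Gfun α ((x : ℂ) - ε * Complex.I))
        (nhdsWithin 0 (Set.Ioi 0)) (𝓝 Gm) ∧
      Gm = Gp * Complex.exp ((α : ℂ) * (Real.pi : ℂ) * Complex.I)) ∧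
    (∃ δ C : ℝ, 0 < δ ∧ ∀ ζ ∈ SlitPlane1, ‖ζ‖ < δ →
      ‖Gfun α ζ‖ ≤ C ∧ ‖(Gfun α ζ)⁻¹‖ ≤ C) ∧
    (∃ c C δ : ℝ, 0 < c ∧ 0 < δ ∧ ∀ ζ ∈ SlitPlane1, ‖ζ - 1‖ < δ →
      c * ‖ζ - 1‖ ^ (-(α / 2)) ≤ ‖Gfun α ζ‖ ∧
      ‖Gfun α ζ‖ ≤ C * ‖ζ - 1‖ ^ (-(α / 2))) ∧
    (∃ C R : ℝ, ∀ ζ ∈ SlitPlane1, R ≤ ‖ζ‖ →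
      ‖Gfun α ζ - 1‖ ≤ C / Real.sqrt (‖ζ‖)) := by
  refine ⟨differentiableOn_Gfun α, fun ζ hζ => ?_, fun x hx => ?_, fun x hx0 hx1 => ?_,
    ⟨1 / 4, 2 ^ |α|, by norm_num, fun ζ hζ h =>
      norm_Gfun_le_and_norm_inv_le_of_norm_le α hζ h.le⟩,
    ⟨_, _, 1 / 2, by positivity, by norm_num, fun ζ hζ h => norm_Gfun_near_one α hζ h.le⟩,
    ⟨_, _, fun ζ hζ h => norm_Gfun_sub_one_le α hζ h⟩⟩
  · rw [Gfun_eq_exp_logGfun α hζ]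
    exact exp_ne_zero _
  · obtain ⟨hp, hm⟩ := tendsto_Gfun_boundary α hx.ne (by linarith)
    refine ⟨_, _, hp, hm, ?_⟩
    rw [← exp_add, add_conj, re_logGfun_of_neg α hx, mul_zero, ofReal_zero, exp_zero]
  · obtain ⟨hp, hm⟩ := tendsto_Gfun_boundary α hx0.ne' hx1.ne
    refine ⟨_, _, hp, hm, ?_⟩
    rw [conj_logGfun_of_pos_of_lt_one α hx0 hx1, exp_add]

end
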